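/- arXiv:2411.01296 — 4 statements merged into one kernel-verified Lean document; each statement's English description precedes it below -/
import Mathlib

section
/- Fix a real number c > 1/2, an integer k ≥ 4, and an even integer n ≥ 2. Let a_0 ≥ a_1 ≥ ⋯ ≥ a_{n−1} be a non-increasing sequence of real numbers in [0,1] with ∑_{i=0}^{n−1} a_i > nc. Then there exist indices i_1, …, i_k ∈ {0, 1, …, n−1} with i_1 + ⋯ + i_k ≥ n such that a_{i_1} + ⋯ + a_{i_k} > ck and a_{i_1} · a_{i_2} ⋯ a_{i_k} > 0. -/
lemma sum_ite_even_odd {M : Type*} [AddCommMonoid M] (x y : M) (k : ℕ) :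
    ∑ t ∈ Finset.range k, (if t % 2 = 0 then x else y)
      = ((k + 1) / 2) • x + (k / 2) • y := by
  induction k with
  | zero => simp
  | succ k ih =>
    rw [Finset.sum_range_succ, ih]
    rcases Nat.even_or_odd k with ⟨q, hq⟩ | ⟨q, hq⟩
    · subst hq
      have h1 : (q + q) % 2 = 0 := by omega
      have h2 : (q + q + 1) / 2 = q := by omega
      have h3 : (q + q) / 2 = q := by omega
      have h4 : (q + q + 1 + 1) / 2 = q + 1 := by omega
      rw [h1]; simp only [h2, h3, h4]
      rw [succ_nsmul]
      abel
    · subst hq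
      have h1 : ¬ (2 * q + 1) % 2 = 0 := by omega
      have h2 : (2 * q + 1 + 1) / 2 = q + 1 := by omega
      have h3 : (2 * q + 1) / 2 = q := by omega
      have h4 : (2 * q + 1 + 1 + 1) / 2 = q + 1 := by omega
      rw [if_neg h1]; simp only [h2, h3, h4]
      simp only [succ_nsmul]
      abel

/-- **Combinatorial lemma for a single sequence (Lemma `lemOne`).** Fix `c > 1/2`,
`k ≥ 4`, and an even `n ≥ 2`. If `a_0 ≥ a_1 ≥ ⋯ ≥ a_{n−1}` lie in `[0,1]` and
`∑ a_i > nc`, then there are indices `i_1, …, i_k < n` with `i_1 + ⋯ + i_k ≥ n`,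
`a_{i_1} + ⋯ + a_{i_k} > ck`, and `a_{i_1} ⋯ a_{i_k} > 0`. -/
theorem single_sequence_lemma (c : ℝ) (hc : 1 / 2 < c)
    (k n : ℕ) (hk : 4 ≤ k) (hn : 2 ≤ n) (hneven : Even n)
    (a : ℕ → ℝ)
    (hmono : ∀ i j, i ≤ j → j < n → a j ≤ a i)
    (hrange : ∀ i < n, a i ∈ Set.Icc (0 : ℝ) 1)
    (hsum : ∑ i ∈ Finset.range n, a i > (n : ℝ) * c) :
    ∃ idx : Fin k → ℕ, (∀ j, idx j < n) ∧ n ≤ ∑ j, idx j ∧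
      (∑ j, a (idx j) > c * k) ∧ (0 < ∏ j, a (idx j)) := by
  obtain ⟨m, hm⟩ := hneven
  have hmn : n = 2 * m := by omega
  have hm1 : 1 ≤ m := by omega
  -- find a good pair
  have key : ∃ i < m, 2 * c < a i + a (n - 1 - i) := by
    by_contra h
    push_neg at h
    have hsplit : ∑ i ∈ Finset.range n, a i
        = ∑ i ∈ Finset.range m, a i + ∑ i ∈ Finset.range m, a (m + i) := by
      rw [show n = m + m from by omega, Finset.sum_range_add]
    have hrefl : ∑ i ∈ Finset.range m, a (m + i)
        = ∑ i ∈ Finset.range m, a (n - 1 - i) := by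
      rw [← Finset.sum_range_reflect (fun i => a (m + i)) m]
      apply Finset.sum_congr rfl
      intro i hi
      simp only [Finset.mem_range] at hi
      congr 1
      omega
    have hle : ∑ i ∈ Finset.range m, (a i + a (n - 1 - i)) ≤ ∑ _i ∈ Finset.range m, (2 * c) :=
      Finset.sum_le_sum (fun i hi => h i (Finset.mem_range.mp hi))
    rw [Finset.sum_add_distrib] at hle
    simp only [Finset.sum_const, Finset.card_range, nsmul_eq_mul] at hle
    rw [hsplit, hrefl] at hsum
    have : ((n : ℝ)) = 2 * m := by exact_mod_cast hmn
    nlinarith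
  obtain ⟨i, hi, hpair⟩ := key
  set b := n - 1 - i with hb
  have hbn : b < n := by omega
  have hin : i < n := by omega
  have hib : i ≤ b := by omega
  have hbm : m ≤ b := by omega
  have hba : a b ≤ a i := hmono i b hib hbn
  have hai : c < a i := by linarith
  have hai1 : a i ≤ 1 := (hrange i hin).2
  have hab : 0 < a b := by linarith
  have hai0 : 0 < a i := by linarith
  refine ⟨fun j => if j.val % 2 = 0 then i else b, ?_, ?_, ?_, ?_⟩
  · intro j; dsimp only; split <;> omega
  · rw [Fin.sum_univ_eq_sum_range (fun t => if t % 2 = 0 then i else b) k,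
      sum_ite_even_odd, smul_eq_mul, smul_eq_mul]
    have ho : 2 ≤ k / 2 := by omega
    have : 2 * b ≤ (k / 2) * b := Nat.mul_le_mul_right b ho
    omega
  · rw [Fin.sum_univ_eq_sum_range (fun j => a (if j % 2 = 0 then i else b)) k]
    have : ∀ t, a (if t % 2 = 0 then i else b) = (if t % 2 = 0 then a i else a b) := by
      intro t; split <;> rfl
    simp only [this]
    rw [sum_ite_even_odd, nsmul_eq_mul, nsmul_eq_mul]
    set e := (k + 1) / 2 with he
    set o := k / 2 with hok
    have hko : e + o = k := by omega
    have ho1 : 1 ≤ o := by omega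
    have hkr : (k : ℝ) = (e : ℝ) + o := by exact_mod_cast hko.symm
    have ho1' : (1 : ℝ) ≤ (o : ℝ) := by exact_mod_cast ho1
    rcases (by omega : e = o ∨ e = o + 1) with h | h
    · rw [hkr, h]; push_cast; nlinarith
    · rw [hkr, h]; push_cast; nlinarith
  · apply Finset.prod_pos
    intro j _
    dsimp only
    split <;> assumption
end

section
/- The bound (16/3)γ − 1 in the four-sequence lemma is sharp: for every δ > 0 there exist a real number γ > 5/8 and four non-increasing pairs (a_0, a_1), (b_0, b_1), (c_0, c_1), (d_0, d_1) of real numbers in [0,1] with a_0·b_0·c_0·d_0 > 0 and a_0 + a_1 + b_0 + b_1 + c_0 + c_1 + d_0 + d_1 > 8γ, such that every (i, j, k, l) ∈ {0,1}^4 with i + j + k + l ≥ 2 and a_i·b_j·c_k·d_l > 0 satisfies a_i + b_j + c_k + d_l ≤ (16/3)γ − 1 + δ. (An example is a = b = c = (1, 2/3) and d = (ε, 0) for small ε > 0.) -/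
/-!
Take `a = b = c = (1, 2/3)` and `d = (ε, 0)` with `ε = min δ 1`. Since `d₁ = 0`, a positive
product forces `l = 0`, so at least two of `i, j, k` equal `1` and
`a_i + b_j + c_k + d_l ≤ 1 + 2/3 + 2/3 + ε = 7/3 + ε`, while the total sum is `5 + ε`.
With `γ = 5/8 + ε/16` we have `8γ = 5 + ε/2` and `(16/3)γ − 1 = 7/3 + ε/3`.
-/

lemma add_add_le_of_two_le {p : Fin 2 → ℝ} (hp : p 1 ≤ p 0) {i j k : Fin 2}
    (h : 2 ≤ (i : ℕ) + j + k) : p i + p j + p k ≤ p 0 + 2 * p 1 := by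
  fin_cases i <;> fin_cases j <;> fin_cases k <;> simp at h ⊢ <;> linarith

lemma eq_zero_of_pos_mul {d : Fin 2 → ℝ} (hd : d 1 = 0) {m : ℝ} {l : Fin 2}
    (h : 0 < m * d l) : l = 0 := by
  fin_cases l
  · rfl
  · simp [hd] at h

lemma sharp_example_sum_le (ε : ℝ) (i j k l : Fin 2)
    (h : 2 ≤ (i : ℕ) + j + k + l)
    (hpos : 0 < ![1, 2/3] i * ![1, 2/3] j * ![1, 2/3] k * ![ε, 0] l) :
    ![1, 2/3] i + ![1, 2/3] j + ![1, 2/3] k + ![ε, 0] l ≤ (7/3 + ε : ℝ) := by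
  obtain rfl : l = 0 := eq_zero_of_pos_mul rfl hpos
  have := add_add_le_of_two_le (p := ![(1 : ℝ), 2/3]) (by norm_num) (by simpa using h)
  simp only [Matrix.cons_val_zero, Matrix.cons_val_one] at this ⊢
  linarith

/-- **Sharpness of the bound `(16/3)γ − 1` in the four-pair lemma.** For every `δ > 0`
there are `γ > 5/8` and four non-increasing pairs in `[0,1]` satisfying the hypotheses
of the four-pair lemma, for which every admissible choice `(i,j,k,l)` with
`i+j+k+l ≥ 2` and positive product has `a_i + b_j + c_k + d_l ≤ (16/3)γ − 1 + δ`. -/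
theorem four_pair_lemma_sharp :
    ∀ δ : ℝ, 0 < δ →
      ∃ γ : ℝ, 5 / 8 < γ ∧
        ∃ a b c d : Fin 2 → ℝ,
          (a 1 ≤ a 0) ∧ (b 1 ≤ b 0) ∧ (c 1 ≤ c 0) ∧ (d 1 ≤ d 0) ∧
          (∀ i : Fin 2, a i ∈ Set.Icc (0 : ℝ) 1 ∧ b i ∈ Set.Icc (0 : ℝ) 1 ∧
            c i ∈ Set.Icc (0 : ℝ) 1 ∧ d i ∈ Set.Icc (0 : ℝ) 1) ∧
          (0 < a 0 * b 0 * c 0 * d 0) ∧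
          (a 0 + a 1 + b 0 + b 1 + c 0 + c 1 + d 0 + d 1 > 8 * γ) ∧
          (∀ i j k l : Fin 2, 2 ≤ (i : ℕ) + (j : ℕ) + (k : ℕ) + (l : ℕ) →
            0 < a i * b j * c k * d l →
            a i + b j + c k + d l ≤ 16 / 3 * γ - 1 + δ) := by
  intro δ hδ
  set ε := min δ 1
  have hε0 : 0 < ε := lt_min hδ one_pos
  have hεδ : ε ≤ δ := min_le_left _ _
  have hε1 : ε ≤ 1 := min_le_right _ _
  have hpair : ∀ i : Fin 2, ![(1 : ℝ), 2/3] i ∈ Set.Icc (0 : ℝ) 1 := by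
    intro i; fin_cases i <;> norm_num
  have hd : ∀ l : Fin 2, ![ε, 0] l ∈ Set.Icc (0 : ℝ) 1 := by
    intro l; fin_cases l <;> simp [hε0.le, hε1]
  refine ⟨5/8 + ε/16, by linarith, ![1, 2/3], ![1, 2/3], ![1, 2/3], ![ε, 0],
    by norm_num, by norm_num, by norm_num, by simpa using hε0.le,
    fun i => ⟨hpair i, hpair i, hpair i, hd i⟩, by simpa using hε0, ?_, ?_⟩
  · simp only [Matrix.cons_val_zero, Matrix.cons_val_one]
    linarith
  · intro i j k l h hpos
    linarith [sharp_example_sum_le ε i j k l h hpos]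
end

section
/- Let k ≥ 5 be an integer and c > (k+1)/(2k) a real number. For 1 ≤ j ≤ k, let (a_{0,j}, a_{1,j}) be non-increasing pairs of real numbers in [0,1] with a_{0,j} > 0 for every j, and assume ∑_{j=1}^{k} (a_{0,j} + a_{1,j}) > 2kc. Then there exist i_1, …, i_k ∈ {0,1} with i_1 + ⋯ + i_k ≥ 2 such that a_{i_1,1} + ⋯ + a_{i_k,k} > kc and a_{i_1,1} ⋯ a_{i_k,k} ≠ 0. -/
/-!
Putting index 1 exactly on a set `T` of coordinates changes the all-zero sum `∑ a_{0,j}` by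
`-∑_{j ∈ T} (a_{0,j} - a_{1,j})`, and keeps the product nonzero when `a_{1,j} > 0` on `T`. So it
suffices to find two coordinates in `P = {j | a_{1,j} > 0}` whose gaps sum to less than
`∑ a_{0,j} - kc`. Since `∑ a_{1,j} > 2kc - k > 1`, `P` has at least two elements.
If `|P| ≤ 3`, any pair in `P` carries all of `∑ a_{1,j}` up to at most `1`, so its gaps sum to
at most `3 - ∑ a_{1,j}`, and `kc > (k+1)/2 ≥ 3` finishes. If `|P| ≥ 4`, the pair in `P` with the
least gap sum has at most half of the total gap `∑ (a_{0,j} - a_{1,j})`, leaving at least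
`(∑ a_{0,j} + ∑ a_{1,j}) / 2 > kc`.
-/

open Finset

section Switch

variable {ι : Type*} [Fintype ι] [DecidableEq ι]

def switchOn (T : Finset ι) (j : ι) : Fin 2 := if j ∈ T then 1 else 0

theorem sum_val_switchOn (T : Finset ι) : ∑ j, (switchOn T j : ℕ) = #T := by
  simp [switchOn, apply_ite Fin.val, Finset.sum_ite_mem]

theorem sum_apply_switchOn {M : Type*} [AddCommGroup M] (a : ι → Fin 2 → M) (T : Finset ι) :
    ∑ j, a j (switchOn T j) = ∑ j, a j 0 - ∑ j ∈ T, (a j 0 - a j 1) := by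
  have h : ∀ j, a j (switchOn T j) = a j 0 - if j ∈ T then a j 0 - a j 1 else 0 := by
    intro j; unfold switchOn; split_ifs <;> abel
  simp only [h, Finset.sum_sub_distrib, Finset.sum_ite_mem, Finset.univ_inter]

theorem prod_apply_switchOn_pos {R : Type*} [CommMonoidWithZero R] [PartialOrder R]
    [ZeroLEOneClass R] [PosMulStrictMono R] [Nontrivial R] (a : ι → Fin 2 → R) (T : Finset ι)
    (h0 : ∀ j, 0 < a j 0) (h1 : ∀ j ∈ T, 0 < a j 1) : 0 < ∏ j, a j (switchOn T j) := by
  refine Finset.prod_pos fun j _ => ?_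
  unfold switchOn; split_ifs with hj
  exacts [h1 j hj, h0 j]

end Switch

theorem exists_pair_subset_two_nsmul_sum_le {ι M : Type*} [AddCommMonoid M] [LinearOrder M]
    [IsOrderedAddMonoid M] {P : Finset ι} {f : ι → M} (hP : 4 ≤ #P) (hf : ∀ i ∈ P, 0 ≤ f i) :
    ∃ T ⊆ P, #T = 2 ∧ 2 • ∑ i ∈ T, f i ≤ ∑ i ∈ P, f i := by
  classical
  obtain ⟨T, hT, hTmin⟩ := (P.powersetCard 2).exists_min_image (fun T => ∑ i ∈ T, f i)
    (powersetCard_nonempty.2 (by omega))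
  rw [mem_powersetCard] at hT
  obtain ⟨T', hT', hT'2⟩ := exists_subset_card_eq (s := P \ T) (n := 2)
    (by rw [card_sdiff_of_subset hT.1]; omega)
  refine ⟨T, hT.1, hT.2, ?_⟩
  calc 2 • ∑ i ∈ T, f i = ∑ i ∈ T, f i + ∑ i ∈ T, f i := two_nsmul _
    _ ≤ ∑ i ∈ T', f i + ∑ i ∈ T, f i :=
      add_le_add_left (hTmin T' (mem_powersetCard.2 ⟨hT'.trans sdiff_subset, hT'2⟩)) _
    _ ≤ ∑ i ∈ P \ T, f i + ∑ i ∈ T, f i :=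
      add_le_add_left (sum_le_sum_of_subset_of_nonneg hT' fun i hi _ =>
        hf i (mem_sdiff.1 hi).1) _
    _ = ∑ i ∈ P, f i := sum_sdiff hT.1

theorem exists_pair_subset_sum_le_sum_add_one {ι : Type*} {P : Finset ι} {g : ι → ℝ}
    (hP2 : 2 ≤ #P) (hP3 : #P ≤ 3) (hg : ∀ i ∈ P, g i ≤ 1) :
    ∃ T ⊆ P, #T = 2 ∧ ∑ i ∈ P, g i ≤ ∑ i ∈ T, g i + 1 := by
  classical
  obtain ⟨T, hTP, hT2⟩ := exists_subset_card_eq hP2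
  refine ⟨T, hTP, hT2, ?_⟩
  have hrest : ∑ i ∈ P \ T, g i ≤ 1 := by
    calc ∑ i ∈ P \ T, g i ≤ #(P \ T) • (1 : ℝ) :=
          sum_le_card_nsmul _ _ _ fun i hi => hg i (mem_sdiff.1 hi).1
      _ ≤ 1 := by
        rw [card_sdiff_of_subset hTP, nsmul_eq_mul, mul_one]
        exact_mod_cast (by omega : #P - #T ≤ 1)
  rw [← sum_sdiff hTP]
  linarith

theorem add_one_div_two_lt_mul {x c : ℝ} (hx : 0 < x) (hc : (x + 1) / (2 * x) < c) :
    (x + 1) / 2 < x * c := by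
  have h : x * ((x + 1) / (2 * x)) = (x + 1) / 2 := by field_simp
  linarith [mul_lt_mul_of_pos_left hc hx]

section Pairs

variable {ι : Type*} [Fintype ι] (a : ι → Fin 2 → ℝ)

theorem exists_pair_sum_gap_le_three_sub_of_card_le_three
    (hrange : ∀ j i, a j i ∈ Set.Icc (0 : ℝ) 1) (hS1 : 1 < ∑ j, a j 1)
    (hP3 : #({j | 0 < a j 1} : Finset _) ≤ 3) :
    ∃ T ⊆ ({j | 0 < a j 1} : Finset _), #T = 2 ∧
      ∑ j ∈ T, (a j 0 - a j 1) ≤ 3 - ∑ j, a j 1 := by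
  set P := ({j | 0 < a j 1} : Finset _)
  have hS1P : ∑ j, a j 1 = ∑ j ∈ P, a j 1 :=
    (sum_filter_of_ne fun j _ h => lt_of_le_of_ne (hrange j 1).1 (Ne.symm h)).symm
  have hP2 : 2 ≤ #P := by
    have h := sum_le_card_nsmul P (fun j => a j 1) 1 fun j _ => (hrange j 1).2
    rw [nsmul_eq_mul, mul_one, ← hS1P] at h
    have : (1 : ℝ) < #P := by linarith
    exact_mod_cast this
  obtain ⟨T, hTP, hT2, hT⟩ := exists_pair_subset_sum_le_sum_add_one hP2 hP3
    fun j _ => (hrange j 1).2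
  refine ⟨T, hTP, hT2, ?_⟩
  have : ∑ j ∈ T, a j 0 ≤ 2 := by
    simpa [hT2] using sum_le_card_nsmul T (fun j => a j 0) 1 fun j _ => (hrange j 0).2
  rw [sum_sub_distrib]
  linarith

theorem exists_pair_two_mul_sum_gap_le_of_four_le_card (hmono : ∀ j, a j 1 ≤ a j 0)
    (hP4 : 4 ≤ #({j | 0 < a j 1} : Finset _)) :
    ∃ T ⊆ ({j | 0 < a j 1} : Finset _), #T = 2 ∧
      2 * ∑ j ∈ T, (a j 0 - a j 1) ≤ ∑ j, a j 0 - ∑ j, a j 1 := by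
  have hgap : ∀ j, 0 ≤ a j 0 - a j 1 := fun j => sub_nonneg.2 (hmono j)
  obtain ⟨T, hTP, hT2, hT⟩ := exists_pair_subset_two_nsmul_sum_le hP4 fun j _ => hgap j
  refine ⟨T, hTP, hT2, ?_⟩
  calc 2 * ∑ j ∈ T, (a j 0 - a j 1)
        ≤ ∑ j ∈ ({j | 0 < a j 1} : Finset _), (a j 0 - a j 1) := by rwa [two_mul, ← two_nsmul]
    _ ≤ ∑ j, (a j 0 - a j 1) :=
        sum_le_sum_of_subset_of_nonneg (subset_univ _) fun j _ _ => hgap j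
    _ = ∑ j, a j 0 - ∑ j, a j 1 := sum_sub_distrib _ _

end Pairs

/-- **Base case `n = 2`, `k ≥ 5` of the `k`-sequences lemma.** Let `k ≥ 5` and
`c > (k+1)/(2k)`. Let `(a_{0,j}, a_{1,j})` be non-increasing pairs in `[0,1]` with
`a_{0,j} > 0` and `∑_j (a_{0,j} + a_{1,j}) > 2kc`. Then there are `i_1, …, i_k ∈ {0,1}`
with `i_1 + ⋯ + i_k ≥ 2`, `∑_j a_{i_j,j} > kc` and `∏_j a_{i_j,j} ≠ 0`. -/
theorem k_pairs_base_case (k : ℕ) (hk : 5 ≤ k)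
    (c : ℝ) (hc : ((k : ℝ) + 1) / (2 * k) < c)
    (a : Fin k → Fin 2 → ℝ)
    (hmono : ∀ j, a j 1 ≤ a j 0)
    (hrange : ∀ j i, a j i ∈ Set.Icc (0 : ℝ) 1)
    (hpos : ∀ j, 0 < a j 0)
    (hsum : ∑ j, (a j 0 + a j 1) > 2 * k * c) :
    ∃ i : Fin k → Fin 2, 2 ≤ ∑ j, ((i j : ℕ)) ∧
      (∑ j, a j (i j) > (k : ℝ) * c) ∧
      (∏ j, a j (i j) ≠ 0) := by
  suffices ∃ T ⊆ ({j | 0 < a j 1} : Finset _), #T = 2 ∧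
      ∑ j ∈ T, (a j 0 - a j 1) < ∑ j, a j 0 - k * c by
    obtain ⟨T, hTP, hT2, hT⟩ := this
    refine ⟨switchOn T, ?_, ?_, ?_⟩
    · rw [sum_val_switchOn, hT2]
    · rw [sum_apply_switchOn]; linarith
    · exact (prod_apply_switchOn_pos a T hpos fun j hj => (mem_filter.1 (hTP hj)).2).ne'
  have hk5 : (5 : ℝ) ≤ k := by exact_mod_cast hk
  have hkc := add_one_div_two_lt_mul (by positivity) hc
  have hS0 : ∑ j, a j 0 ≤ k := by
    simpa using sum_le_card_nsmul univ (fun j => a j 0) 1 fun j _ => (hrange j 0).2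
  rw [sum_add_distrib] at hsum
  rcases le_or_gt #({j | 0 < a j 1} : Finset _) 3 with hP3 | hP4
  · obtain ⟨T, hTP, hT2, hT⟩ :=
      exists_pair_sum_gap_le_three_sub_of_card_le_three a hrange (by linarith) hP3
    exact ⟨T, hTP, hT2, by linarith⟩
  · obtain ⟨T, hTP, hT2, hT⟩ := exists_pair_two_mul_sum_gap_le_of_four_le_card a hmono hP4
    exact ⟨T, hTP, hT2, by linarith⟩
end

section
/- Let k ≥ 4 be an integer, N a positive integer, and δ, ε ∈ (0,1). For i = 1, …, k let a_i : ℤ/Nℤ → ℝ be nonnegative functions with ∑_{x ∈ ℤ/Nℤ} a_i(x) ≤ 1. Define R_i = {r ∈ ℤ/Nℤ : |ã_i(r)| ≥ δ}, B_i = {x ∈ ℤ/Nℤ : ‖xr/N‖ ≤ ε for all r ∈ R_i}, β_i = (1/|B_i|)·1_{B_i}, and a_i' = a_i * β_i * β_i. Suppose there are constants D_1, D_2 > 0 such that |R_i| ≤ D_1·δ^{−5/2} and ∑_{r ∈ ℤ/Nℤ} |ã_i(r)|^{k²/(k+1)} ≤ D_2 for every i. Then there is a constant K depending only on k such that for every n'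 ∈ ℤ/Nℤ, | ∑_{x_1+⋯+x_k=n'} ∏_{i=1}^k a_i'(x_i) − ∑_{x_1+⋯+x_k=n'} ∏_{i=1}^k a_i(x_i) | ≤ K·(D_1·ε²·δ^{−5/2} + D_2·δ^{1/(k+1)})/N. -/
open scoped Classical
open Finset

/-- The Fourier transform on `ℤ/Nℤ` of a real function:
`f̃(r) = ∑_x f(x) e(−xr/N)` where `e(t) = e^{2πit}`. -/
noncomputable def dftZMod (N : ℕ) [NeZero N] (f : ZMod N → ℝ) (r : ZMod N) : ℂ :=
  ∑ x : ZMod N, (f x : ℂ) *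
    Complex.exp (-(2 * Real.pi * Complex.I * (((x.val * r.val : ℕ) : ℝ) / (N : ℝ))))

/-- `‖t‖`, the distance from a real number `t` to the nearest integer. -/
noncomputable def distNearestInt (t : ℝ) : ℝ := |t - round t|

/-- The super-level set `R = {r : |f̃(r)| ≥ δ}` of the Fourier transform. -/
noncomputable def fourierLevelSet (N : ℕ) [NeZero N] (δ : ℝ) (f : ZMod N → ℝ) :
    Set (ZMod N) :=
  {r | δ ≤ ‖dftZMod N f r‖}

/-- The Bohr-type set `B = {x : ‖xr/N‖ ≤ ε for all r ∈ R}`. -/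
noncomputable def bohrSet (N : ℕ) [NeZero N] (δ ε : ℝ) (f : ZMod N → ℝ) :
    Set (ZMod N) :=
  {x | ∀ r ∈ fourierLevelSet N δ f, distNearestInt (((x.val * r.val : ℕ) : ℝ) / (N : ℝ)) ≤ ε}

/-- The normalized indicator `β = (1/|B|)·1_B` of the Bohr set. -/
noncomputable def bohrMeasure (N : ℕ) [NeZero N] (δ ε : ℝ) (f : ZMod N → ℝ) :
    ZMod N → ℝ :=
  fun x => if x ∈ bohrSet N δ ε f then ((Nat.card (bohrSet N δ ε f) : ℝ))⁻¹ else 0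

/-- Convolution on `ℤ/Nℤ`: `(f*g)(x) = ∑_y f(y) g(x−y)`. -/
noncomputable def convZMod (N : ℕ) [NeZero N] (f g : ZMod N → ℝ) : ZMod N → ℝ :=
  fun x => ∑ y : ZMod N, f y * g (x - y)

/-- The smoothed function `a' = a * β * β`. -/
noncomputable def smoothed (N : ℕ) [NeZero N] (δ ε : ℝ) (a : ZMod N → ℝ) : ZMod N → ℝ :=
  convZMod N (convZMod N a (bohrMeasure N δ ε a)) (bohrMeasure N δ ε a)

/-!
By Fourier inversion, `N` times the difference of the two `k`-fold convolutions at `n'` is at most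
`∑_r |∏ ã'_i(r) - ∏ ã_i(r)|`, and `ã'_i = ã_i β̃_i²`. Since `B_i` is symmetric, `β̃_i(r)` is the
real number `∑_x β_i(x) cos(2π xr/N)`, which for `r ∈ R_i` lies in `[1 - 2π²ε², 1]`. Hence at a
frequency lying in every `R_i` (there are at most `|R_1|` of them) the summand is at most
`4π²kε²`. At any other frequency some `|ã_i(r)| < δ`, and a weighted AM-GM inequality bounds
`∏ |ã_i(r)|` by `δ^{1/(k+1)} (k+1)/k² ∑_i |ã_i(r)|^{k²/(k+1)}`.
-/

open scoped Real

lemma AddChar.map_sum_eq_prod {A M ι : Type*} [AddCommMonoid A] [CommMonoid M] (ψ : AddChar A M)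
    (s : Finset ι) (a : ι → A) : ψ (∑ i ∈ s, a i) = ∏ i ∈ s, ψ (a i) := by
  induction s using Finset.cons_induction with
  | empty => simp
  | cons j s hj ih => rw [sum_cons, prod_cons, AddChar.map_add_eq_mul, ih]

section Products

variable {ι R : Type*} [NormedCommRing R] [NormOneClass R]

lemma norm_prod_sub_one_le (s : Finset ι) {z : ι → R} (hz : ∀ i ∈ s, ‖z i‖ ≤ 1) :
    ‖∏ i ∈ s, z i - 1‖ ≤ ∑ i ∈ s, ‖z i - 1‖ := by
  induction s using Finset.cons_induction with
  | empty => simp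
  | cons j s hj ih =>
    have hs : ∀ i ∈ s, ‖z i‖ ≤ 1 := fun i hi ↦ hz i (mem_cons_of_mem hi)
    have hprod : ‖∏ i ∈ s, z i‖ ≤ 1 :=
      (Finset.norm_prod_le s z).trans (prod_le_one (fun _ _ ↦ norm_nonneg _) hs)
    calc ‖∏ i ∈ cons j s hj, z i - 1‖
        = ‖(z j - 1) * ∏ i ∈ s, z i + (∏ i ∈ s, z i - 1)‖ := by rw [prod_cons]; ring_nf
      _ ≤ ‖z j - 1‖ * ‖∏ i ∈ s, z i‖ + ∑ i ∈ s, ‖z i - 1‖ :=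
        (norm_add_le _ _).trans (add_le_add (norm_mul_le _ _) (ih hs))
      _ ≤ ∑ i ∈ cons j s hj, ‖z i - 1‖ := by
        rw [sum_cons]
        gcongr
        exact mul_le_of_le_one_right (norm_nonneg _) hprod

variable [Fintype ι] {F B : ι → R}

lemma norm_prod_mul_sq_sub_prod_le (hF : ∀ i, ‖F i‖ ≤ 1) (hB : ∀ i, ‖B i‖ ≤ 1) {η : ℝ}
    (hη : ∀ i, ‖B i ^ 2 - 1‖ ≤ η) :
    ‖∏ i, F i * B i ^ 2 - ∏ i, F i‖ ≤ Fintype.card ι * η := by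
  have hFprod : ‖∏ i, F i‖ ≤ 1 :=
    (Finset.norm_prod_le _ _).trans (prod_le_one (fun _ _ ↦ norm_nonneg _) fun i _ ↦ hF i)
  have hBsq : ∀ i ∈ univ, ‖B i ^ 2‖ ≤ 1 := fun i _ ↦
    (norm_pow_le _ _).trans (pow_le_one₀ (norm_nonneg _) (hB i))
  calc ‖∏ i, F i * B i ^ 2 - ∏ i, F i‖ = ‖(∏ i, F i) * (∏ i, B i ^ 2 - 1)‖ := by
        rw [prod_mul_distrib, mul_sub_one]
    _ ≤ 1 * ∑ i, ‖B i ^ 2 - 1‖ :=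
        (norm_mul_le _ _).trans (mul_le_mul hFprod (norm_prod_sub_one_le _ hBsq)
          (norm_nonneg _) zero_le_one)
    _ ≤ Fintype.card ι * η := by
        rw [one_mul, ← nsmul_eq_mul, ← card_univ]
        exact sum_le_card_nsmul _ _ _ fun i _ ↦ hη i

lemma norm_prod_mul_sq_sub_prod_le_two_mul (hB : ∀ i, ‖B i‖ ≤ 1) :
    ‖∏ i, F i * B i ^ 2 - ∏ i, F i‖ ≤ 2 * ∏ i, ‖F i‖ := by
  have hsmoothed : ‖∏ i, F i * B i ^ 2‖ ≤ ∏ i, ‖F i‖ :=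
    (Finset.norm_prod_le _ _).trans <| prod_le_prod (fun _ _ ↦ norm_nonneg _) fun i _ ↦
      (norm_mul_le _ _).trans <| mul_le_of_le_one_right (norm_nonneg _) <|
        (norm_pow_le _ _).trans (pow_le_one₀ (norm_nonneg _) (hB i))
  linarith [norm_sub_le (∏ i, F i * B i ^ 2) (∏ i, F i), Finset.norm_prod_le univ F]

end Products

lemma rpow_mul_prod_erase_le_sum_rpow {k : ℕ} {v : Fin k → ℝ} (hv : ∀ i, 0 ≤ v i) (i₀ : Fin k) :
    v i₀ ^ ((1 : ℝ) / ((k : ℝ) + 1)) * ∏ i ∈ univ.erase i₀, v i ≤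
      ((k : ℝ) + 1) / (k : ℝ) ^ 2 * ∑ i, v i ^ (((k : ℝ) ^ 2) / ((k : ℝ) + 1)) := by
  have hk : (0 : ℝ) < k := by exact_mod_cast i₀.pos
  set p : ℝ := (k : ℝ) ^ 2 / ((k : ℝ) + 1)
  have hp : 0 < p := by positivity
  -- weighted AM-GM for the numbers `v i ^ p` with weights `e i / p`, where `e i` is the exponent
  -- of `v i` on the left-hand side
  set e : Fin k → ℝ := fun i ↦ 1 - if i = i₀ then (k : ℝ) / ((k : ℝ) + 1) else 0
  have he_nonneg (i : Fin k) : 0 ≤ e i := by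
    simp only [e]; split_ifs
    · rw [sub_nonneg, div_le_one (by positivity)]; linarith
    · norm_num
  have he_le (i : Fin k) : e i ≤ 1 := by
    simp only [e]; split_ifs <;> [exact sub_le_self _ (by positivity); norm_num]
  have he_sum : ∑ i, e i = p := by
    simp only [e, sum_sub_distrib, sum_ite_eq', mem_univ, if_true, sum_const, card_univ,
      Fintype.card_fin, nsmul_eq_mul, mul_one, p]
    field_simp
    ring
  have hgeom : ∏ i, (v i ^ p) ^ (e i / p) =
      v i₀ ^ ((1 : ℝ) / ((k : ℝ) + 1)) * ∏ i ∈ univ.erase i₀, v i := by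
    simp_rw [← Real.rpow_mul (hv _), mul_div_cancel₀ _ hp.ne']
    rw [← mul_prod_erase _ _ (mem_univ i₀)]
    congr 1
    · congr 1
      simp only [e, if_true]
      field_simp
      ring
    · refine prod_congr rfl fun i hi ↦ ?_
      simp [e, ne_of_mem_erase hi]
  have harith : ∑ i, e i / p * v i ^ p ≤ ((k : ℝ) + 1) / (k : ℝ) ^ 2 * ∑ i, v i ^ p := by
    rw [mul_sum]
    refine sum_le_sum fun i _ ↦ mul_le_mul_of_nonneg_right ?_ (Real.rpow_nonneg (hv i) p)
    calc e i / p ≤ 1 / p := by gcongr; exact he_le i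
      _ = ((k : ℝ) + 1) / (k : ℝ) ^ 2 := one_div_div _ _
  rw [← hgeom]
  exact (Real.geom_mean_le_arith_mean_weighted univ (fun i ↦ e i / p) (fun i ↦ v i ^ p)
    (fun i _ ↦ div_nonneg (he_nonneg i) hp.le) (by rw [← sum_div, he_sum, div_self hp.ne'])
    (fun i _ ↦ Real.rpow_nonneg (hv i) p)).trans harith

lemma prod_le_rpow_mul_sum_rpow {k : ℕ} {v : Fin k → ℝ} (hv : ∀ i, 0 ≤ v i) {δ : ℝ}
    (hδ : δ ≤ 1) {i₀ : Fin k} (hi₀ : v i₀ ≤ δ) :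
    ∏ i, v i ≤ δ ^ ((1 : ℝ) / ((k : ℝ) + 1)) *
      (((k : ℝ) + 1) / (k : ℝ) ^ 2 * ∑ i, v i ^ (((k : ℝ) ^ 2) / ((k : ℝ) + 1))) := by
  have hδ₀ : 0 ≤ δ := (hv i₀).trans hi₀
  calc ∏ i, v i = v i₀ ^ ((k : ℝ) / ((k : ℝ) + 1)) *
        (v i₀ ^ ((1 : ℝ) / ((k : ℝ) + 1)) * ∏ i ∈ univ.erase i₀, v i) := by
        rw [← mul_assoc, ← Real.rpow_add' (hv i₀) (by positivity), ← add_div,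
          div_self (by positivity), Real.rpow_one, mul_prod_erase _ _ (mem_univ i₀)]
    _ ≤ δ ^ ((1 : ℝ) / ((k : ℝ) + 1)) * (((k : ℝ) + 1) / (k : ℝ) ^ 2 *
          ∑ i, v i ^ (((k : ℝ) ^ 2) / ((k : ℝ) + 1))) := by
        refine mul_le_mul ?_ (rpow_mul_prod_erase_le_sum_rpow hv i₀)
          (mul_nonneg (Real.rpow_nonneg (hv i₀) _) (prod_nonneg fun i _ ↦ hv i))
          (Real.rpow_nonneg hδ₀ _)
        calc v i₀ ^ ((k : ℝ) / ((k : ℝ) + 1))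
            ≤ δ ^ ((k : ℝ) / ((k : ℝ) + 1)) := by gcongr; exact hv i₀
          _ ≤ δ ^ ((1 : ℝ) / ((k : ℝ) + 1)) := Real.rpow_le_rpow_of_exponent_ge' hδ₀ hδ
              (by positivity) (by gcongr; exact_mod_cast i₀.pos)

namespace Transference

open ZMod

variable {N : ℕ} [NeZero N]

noncomputable def phase (x r : ZMod N) : ℝ := ((x.val * r.val : ℕ) : ℝ) / N

lemma stdAddChar_mul (x r : ZMod N) :
    (stdAddChar (x * r) : ℂ) = Complex.exp (2 * π * Complex.I * (phase x r : ℂ)) := by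
  have : x * r = ((x.val * r.val : ℕ) : ZMod N) := by simp
  rw [this, stdAddChar_apply, toCircle_natCast, phase]
  push_cast
  ring_nf

lemma norm_stdAddChar (x : ZMod N) : ‖(stdAddChar x : ℂ)‖ = 1 := Circle.norm_coe _

lemma dftZMod_eq_dft (f : ZMod N → ℝ) (r : ZMod N) :
    dftZMod N f r = 𝓕 (fun x ↦ (f x : ℂ)) r := by
  rw [dft_apply, dftZMod]
  refine sum_congr rfl fun x _ ↦ ?_
  rw [smul_eq_mul, mul_comm, AddChar.map_neg_eq_inv, stdAddChar_mul, ← Complex.exp_neg, phase]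
  push_cast
  rfl

lemma norm_dftZMod_le {f : ZMod N → ℝ} (hf : ∀ x, 0 ≤ f x) (r : ZMod N) :
    ‖dftZMod N f r‖ ≤ ∑ x, f x := by
  rw [dftZMod_eq_dft, dft_apply]
  refine (norm_sum_le _ _).trans_eq (sum_congr rfl fun x _ ↦ ?_)
  rw [norm_smul, norm_stdAddChar, one_mul, Complex.norm_real, Real.norm_of_nonneg (hf x)]

lemma dftZMod_convZMod (f g : ZMod N → ℝ) (r : ZMod N) :
    dftZMod N (convZMod N f g) r = dftZMod N f r * dftZMod N g r := by
  simp only [dftZMod_eq_dft, dft_apply, smul_eq_mul]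
  rw [sum_mul_sum]
  simp only [convZMod, Complex.ofReal_sum, Complex.ofReal_mul, mul_sum]
  rw [sum_comm]
  refine sum_congr rfl fun y _ ↦ Fintype.sum_equiv (Equiv.subRight y) _ _ fun x ↦ ?_
  rw [Equiv.subRight_apply, show -(x * r) = -(y * r) + -((x - y) * r) by ring,
    AddChar.map_add_eq_mul]
  ring

lemma dftZMod_eq_sum_cos {f : ZMod N → ℝ} (hf : ∀ x, f (-x) = f x) (r : ZMod N) :
    dftZMod N f r = ↑(∑ x, f x * Real.cos (2 * π * phase x r)) := by
  have hflip : dftZMod N f r = ∑ x, stdAddChar (x * r) * (f x : ℂ) := by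
    rw [dftZMod_eq_dft, dft_apply]
    exact Fintype.sum_equiv (Equiv.neg _) _ _ fun x ↦ by
      rw [Equiv.neg_apply, neg_mul, hf, smul_eq_mul]
  have htwo : 2 * dftZMod N f r = 2 * ↑(∑ x, f x * Real.cos (2 * π * phase x r)) := by
    rw [two_mul]
    nth_rw 2 [hflip]
    rw [dftZMod_eq_dft, dft_apply, ← sum_add_distrib]
    push_cast
    rw [mul_sum]
    refine sum_congr rfl fun x _ ↦ ?_
    rw [smul_eq_mul, AddChar.map_neg_eq_inv, stdAddChar_mul, ← Complex.exp_neg, Complex.cos]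
    ring_nf
  exact mul_left_cancel₀ two_ne_zero htwo

noncomputable def multiConv {k : ℕ} (f : Fin k → ZMod N → ℝ) (n : ZMod N) : ℝ :=
  ∑ x ∈ univ.filter (fun x : Fin k → ZMod N => ∑ i, x i = n), ∏ i, f i (x i)

lemma sum_stdAddChar_mul (b : ZMod N) :
    ∑ r : ZMod N, (stdAddChar (r * b) : ℂ) = if b = 0 then (N : ℂ) else 0 := by
  rw [AddChar.sum_mulShift b (isPrimitive_stdAddChar N), ZMod.card]
  split_ifs <;> simp

lemma natCast_mul_multiConv {k : ℕ} (f : Fin k → ZMod N → ℝ) (n : ZMod N) :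
    (N : ℂ) * multiConv f n = ∑ r, (∏ i, dftZMod N (f i) r) * stdAddChar (n * r) := by
  have hprod (r : ZMod N) : (∏ i, dftZMod N (f i) r) * stdAddChar (n * r) =
      ∑ x : Fin k → ZMod N, stdAddChar (r * (n - ∑ i, x i)) * ∏ i, (f i (x i) : ℂ) := by
    simp only [dftZMod_eq_dft, dft_apply, smul_eq_mul, prod_univ_sum, Fintype.piFinset_univ,
      prod_mul_distrib, ← AddChar.map_sum_eq_prod, sum_mul]
    refine sum_congr rfl fun x _ ↦ ?_
    rw [mul_right_comm, ← AddChar.map_add_eq_mul, sum_neg_distrib, ← sum_mul]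
    ring_nf
  simp only [hprod]
  rw [sum_comm]
  simp only [← sum_mul, sum_stdAddChar_mul, sub_eq_zero, multiConv, sum_filter]
  push_cast
  simp only [mul_sum, ite_mul, zero_mul, eq_comm (a := n)]
  refine sum_congr rfl fun x _ ↦ ?_
  split_ifs <;> push_cast <;> ring

lemma natCast_mul_abs_multiConv_sub_le {k : ℕ} (f g : Fin k → ZMod N → ℝ) (n : ZMod N) :
    N * |multiConv f n - multiConv g n| ≤
      ∑ r, ‖∏ i, dftZMod N (f i) r - ∏ i, dftZMod N (g i) r‖ :=
  calc (N : ℝ) * |multiConv f n - multiConv g n|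
      = ‖(N : ℂ) * multiConv f n - N * multiConv g n‖ := by
        rw [← mul_sub, norm_mul, Complex.norm_natCast, ← Complex.ofReal_sub, Complex.norm_real,
          Real.norm_eq_abs]
    _ = ‖∑ r, (∏ i, dftZMod N (f i) r - ∏ i, dftZMod N (g i) r) * stdAddChar (n * r)‖ := by
        simp only [natCast_mul_multiConv, sub_mul, sum_sub_distrib]
    _ ≤ ∑ r, ‖∏ i, dftZMod N (f i) r - ∏ i, dftZMod N (g i) r‖ :=
        (norm_sum_le _ _).trans_eq (sum_congr rfl fun r _ ↦ by
          rw [norm_mul, norm_stdAddChar, mul_one])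

lemma distNearestInt_int_sub (m : ℤ) (t : ℝ) : distNearestInt (m - t) = distNearestInt t := by
  apply le_antisymm
  · calc |(m - t) - round ((m : ℝ) - t)| ≤ |(m - t) - ((m - round t : ℤ) : ℝ)| := round_le _ _
      _ = |t - round t| := by rw [← abs_neg]; push_cast; ring_nf
  · calc |t - round t| ≤ |t - ((m - round ((m : ℝ) - t) : ℤ) : ℝ)| := round_le _ _
      _ = |(m - t) - round ((m : ℝ) - t)| := by rw [← abs_neg]; push_cast; ring_nf

lemma one_sub_cos_two_pi_mul_le (t : ℝ) :
    1 - Real.cos (2 * π * t) ≤ 2 * π ^ 2 * distNearestInt t ^ 2 := by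
  have hcos : Real.cos (2 * π * t) = Real.cos (2 * π * (t - round t)) := by
    rw [mul_sub, ← Real.cos_sub_int_mul_two_pi _ (round t)]
    ring_nf
  rw [hcos, distNearestInt, sq_abs]
  nlinarith [Real.one_sub_sq_div_two_le_cos (x := 2 * π * (t - round t))]

lemma distNearestInt_phase_neg (x r : ZMod N) :
    distNearestInt (phase (-x) r) = distNearestInt (phase x r) := by
  rcases eq_or_ne x 0 with rfl | hx
  · rw [neg_zero]
  have hval : (-x).val = N - x.val := by rw [ZMod.neg_val, if_neg hx]
  have hphase : phase (-x) r = ((r.val : ℤ) : ℝ) - phase x r := by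
    rw [phase, phase, hval, Nat.sub_mul, Nat.cast_sub (Nat.mul_le_mul_right _ x.val_lt.le)]
    have : (N : ℝ) ≠ 0 := NeZero.ne _
    push_cast
    field_simp
  rw [hphase, distNearestInt_int_sub]

section Bohr

variable {δ ε : ℝ} {f : ZMod N → ℝ}

lemma zero_mem_bohrSet (hε : 0 ≤ ε) : (0 : ZMod N) ∈ bohrSet N δ ε f := fun r _ ↦ by
  simpa [phase, distNearestInt] using hε

lemma neg_mem_bohrSet_iff {x : ZMod N} : -x ∈ bohrSet N δ ε f ↔ x ∈ bohrSet N δ ε f := by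
  show (∀ r ∈ _, distNearestInt (phase (-x) r) ≤ ε) ↔ ∀ r ∈ _, distNearestInt (phase x r) ≤ ε
  simp only [distNearestInt_phase_neg]

lemma bohrMeasure_neg (x : ZMod N) : bohrMeasure N δ ε f (-x) = bohrMeasure N δ ε f x := by
  simp only [bohrMeasure, neg_mem_bohrSet_iff]

lemma bohrMeasure_nonneg (x : ZMod N) : 0 ≤ bohrMeasure N δ ε f x := by
  unfold bohrMeasure
  split_ifs <;> positivity

lemma sum_bohrMeasure (hε : 0 ≤ ε) : ∑ x, bohrMeasure N δ ε f x = 1 := by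
  have : Nonempty (bohrSet N δ ε f) := ⟨⟨0, zero_mem_bohrSet hε⟩⟩
  simp only [bohrMeasure]
  rw [sum_ite, sum_const_zero, add_zero, sum_const, nsmul_eq_mul,
    Set.filter_mem_univ_eq_toFinset, ← Nat.card_eq_card_toFinset]
  exact mul_inv_cancel₀ (Nat.cast_ne_zero.2 Nat.card_pos.ne')

lemma bohrMeasure_mul_one_sub_cos_le {r : ZMod N} (hr : r ∈ fourierLevelSet N δ f)
    (x : ZMod N) :
    bohrMeasure N δ ε f x * (1 - Real.cos (2 * π * phase x r)) ≤
      bohrMeasure N δ ε f x * (2 * π ^ 2 * ε ^ 2) := by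
  by_cases hx : x ∈ bohrSet N δ ε f
  · refine mul_le_mul_of_nonneg_left ((one_sub_cos_two_pi_mul_le _).trans ?_)
      (bohrMeasure_nonneg x)
    have hd : distNearestInt (phase x r) ≤ ε := hx r hr
    gcongr
    exact abs_nonneg _
  · simp [bohrMeasure, hx]

lemma norm_dftZMod_bohrMeasure_sq_sub_one_le (hε : 0 ≤ ε) {r : ZMod N}
    (hr : r ∈ fourierLevelSet N δ f) :
    ‖dftZMod N (bohrMeasure N δ ε f) r ^ 2 - 1‖ ≤ 4 * π ^ 2 * ε ^ 2 := by
  set c := ∑ x, bohrMeasure N δ ε f x * Real.cos (2 * π * phase x r)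
  have hc : dftZMod N (bohrMeasure N δ ε f) r = c := dftZMod_eq_sum_cos bohrMeasure_neg r
  have habs : |c| ≤ 1 := by
    have := norm_dftZMod_le (bohrMeasure_nonneg (δ := δ) (ε := ε) (f := f)) r
    rwa [hc, Complex.norm_real, Real.norm_eq_abs, sum_bohrMeasure hε] at this
  have hlow : 1 - 2 * π ^ 2 * ε ^ 2 ≤ c := by
    have := sum_le_sum fun x (_ : x ∈ univ) ↦ bohrMeasure_mul_one_sub_cos_le (ε := ε) hr x
    simp only [mul_sub, mul_one, sum_sub_distrib, ← sum_mul, sum_bohrMeasure hε] at this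
    linarith
  rw [hc, ← Complex.ofReal_pow, ← Complex.ofReal_one, ← Complex.ofReal_sub, Complex.norm_real,
    Real.norm_eq_abs, abs_le]
  constructor <;> nlinarith [abs_le.mp habs]

end Bohr

lemma dftZMod_smoothed (δ ε : ℝ) (a : ZMod N → ℝ) (r : ZMod N) :
    dftZMod N (smoothed N δ ε a) r = dftZMod N a r * dftZMod N (bohrMeasure N δ ε a) r ^ 2 := by
  rw [smoothed, dftZMod_convZMod, dftZMod_convZMod]
  ring

section Smoothing

variable {k : ℕ} {δ ε : ℝ} {a : Fin k → ZMod N → ℝ}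

lemma norm_prod_dftZMod_smoothed_sub_le (i₀ : Fin k) (hδ₀ : 0 ≤ δ) (hδ₁ : δ ≤ 1) (hε : 0 ≤ ε)
    (ha : ∀ i x, 0 ≤ a i x) (hmass : ∀ i, ∑ x, a i x ≤ 1) (r : ZMod N) :
    ‖∏ i, dftZMod N (smoothed N δ ε (a i)) r - ∏ i, dftZMod N (a i) r‖ ≤
      (if r ∈ fourierLevelSet N δ (a i₀) then k * (4 * π ^ 2 * ε ^ 2) else 0) +
      2 * (δ ^ ((1 : ℝ) / ((k : ℝ) + 1)) * (((k : ℝ) + 1) / (k : ℝ) ^ 2 *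
        ∑ i, ‖dftZMod N (a i) r‖ ^ (((k : ℝ) ^ 2) / ((k : ℝ) + 1)))) := by
  have hF (i : Fin k) : ‖dftZMod N (a i) r‖ ≤ 1 := (norm_dftZMod_le (ha i) r).trans (hmass i)
  have hB (i : Fin k) : ‖dftZMod N (bohrMeasure N δ ε (a i)) r‖ ≤ 1 :=
    (norm_dftZMod_le bohrMeasure_nonneg r).trans_eq (sum_bohrMeasure hε)
  have hsum_nonneg : 0 ≤ ∑ i, ‖dftZMod N (a i) r‖ ^ (((k : ℝ) ^ 2) / ((k : ℝ) + 1)) :=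
    sum_nonneg fun i _ ↦ Real.rpow_nonneg (norm_nonneg _) _
  simp only [dftZMod_smoothed]
  by_cases hr : ∀ i, r ∈ fourierLevelSet N δ (a i)
  · rw [if_pos (hr i₀)]
    have := norm_prod_mul_sq_sub_prod_le hF hB fun i ↦
      norm_dftZMod_bohrMeasure_sq_sub_one_le hε (hr i)
    rw [Fintype.card_fin] at this
    exact le_add_of_le_of_nonneg this (by positivity)
  · obtain ⟨i, hi⟩ := not_forall.mp hr
    have hsmall : ‖dftZMod N (a i) r‖ ≤ δ := (not_le.mp hi).le
    refine le_add_of_nonneg_of_le (by split_ifs <;> positivity) ?_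
    calc _ ≤ 2 * ∏ i, ‖dftZMod N (a i) r‖ := norm_prod_mul_sq_sub_prod_le_two_mul hB
      _ ≤ _ := by
        gcongr
        exact prod_le_rpow_mul_sum_rpow (fun _ ↦ norm_nonneg _) hδ₁ hsmall

lemma natCast_mul_abs_multiConv_smoothed_sub_le (i₀ : Fin k) (hδ₀ : 0 ≤ δ) (hδ₁ : δ ≤ 1)
    (hε : 0 ≤ ε) (ha : ∀ i x, 0 ≤ a i x) (hmass : ∀ i, ∑ x, a i x ≤ 1) {D : ℝ}
    (hD : ∀ i, ∑ r, ‖dftZMod N (a i) r‖ ^ (((k : ℝ) ^ 2) / ((k : ℝ) + 1)) ≤ D) (n : ZMod N) :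
    N * |multiConv (fun i ↦ smoothed N δ ε (a i)) n - multiConv a n| ≤
      4 * π ^ 2 * k * ε ^ 2 * Nat.card (fourierLevelSet N δ (a i₀)) +
        2 * (((k : ℝ) + 1) / k) * δ ^ ((1 : ℝ) / ((k : ℝ) + 1)) * D := by
  have hk : (0 : ℝ) < k := by exact_mod_cast i₀.pos
  have hsum : ∑ i, ∑ r, ‖dftZMod N (a i) r‖ ^ (((k : ℝ) ^ 2) / ((k : ℝ) + 1)) ≤ k * D :=
    (sum_le_sum fun i _ ↦ hD i).trans_eq (by simp)
  calc (N : ℝ) * |multiConv (fun i ↦ smoothed N δ ε (a i)) n - multiConv a n|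
      ≤ ∑ r, ((if r ∈ fourierLevelSet N δ (a i₀) then k * (4 * π ^ 2 * ε ^ 2) else 0) +
          2 * (δ ^ ((1 : ℝ) / ((k : ℝ) + 1)) * (((k : ℝ) + 1) / (k : ℝ) ^ 2 *
            ∑ i, ‖dftZMod N (a i) r‖ ^ (((k : ℝ) ^ 2) / ((k : ℝ) + 1))))) :=
        (natCast_mul_abs_multiConv_sub_le _ _ n).trans <| sum_le_sum fun r _ ↦
          norm_prod_dftZMod_smoothed_sub_le i₀ hδ₀ hδ₁ hε ha hmass r
    _ = k * (4 * π ^ 2 * ε ^ 2) * Nat.card (fourierLevelSet N δ (a i₀)) +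
          2 * (δ ^ ((1 : ℝ) / ((k : ℝ) + 1)) * (((k : ℝ) + 1) / (k : ℝ) ^ 2 *
            ∑ i, ∑ r, ‖dftZMod N (a i) r‖ ^ (((k : ℝ) ^ 2) / ((k : ℝ) + 1)))) := by
        rw [sum_add_distrib, sum_ite, sum_const_zero, add_zero, sum_const, nsmul_eq_mul,
          Set.filter_mem_univ_eq_toFinset, ← Nat.card_eq_card_toFinset, ← mul_sum, ← mul_sum,
          ← mul_sum, sum_comm]
        ring
    _ ≤ k * (4 * π ^ 2 * ε ^ 2) * Nat.card (fourierLevelSet N δ (a i₀)) +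
          2 * (δ ^ ((1 : ℝ) / ((k : ℝ) + 1)) * (((k : ℝ) + 1) / (k : ℝ) ^ 2 * (k * D))) := by
        gcongr
    _ = _ := by
        field_simp

end Smoothing

end Transference

open Transference

/-- **Transference estimate (Lemma `l:aa'`).** For `k ≥ 4` there is a constant `K`
depending only on `k` such that: for every `N`, `δ, ε ∈ (0,1)`, nonnegative functions
`a_1, …, a_k : ℤ/Nℤ → ℝ` of total mass at most `1`, and constants `D₁, D₂ > 0` with
`|R_i| ≤ D₁ δ^{−5/2}` and `∑_r |ã_i(r)|^{k²/(k+1)} ≤ D₂`, the smoothed and the original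
`k`-fold convolutions at any `n'` differ by at most
`K (D₁ ε² δ^{−5/2} + D₂ δ^{1/(k+1)}) / N`. -/
theorem transference_estimate (k : ℕ) (hk : 4 ≤ k) :
    ∃ K : ℝ, 0 < K ∧
      ∀ (N : ℕ) [NeZero N], ∀ δ ε : ℝ,
        δ ∈ Set.Ioo (0 : ℝ) 1 → ε ∈ Set.Ioo (0 : ℝ) 1 →
        ∀ a : Fin k → ZMod N → ℝ,
          (∀ i x, 0 ≤ a i x) →
          (∀ i, ∑ x : ZMod N, a i x ≤ 1) →
        ∀ D₁ D₂ : ℝ, 0 < D₁ → 0 < D₂ →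
          (∀ i, (Nat.card (fourierLevelSet N δ (a i)) : ℝ) ≤ D₁ * δ ^ (-(5 : ℝ) / 2)) →
          (∀ i, ∑ r : ZMod N,
              ‖dftZMod N (a i) r‖ ^ (((k : ℝ) ^ 2) / ((k : ℝ) + 1)) ≤ D₂) →
        ∀ n' : ZMod N,
          |(∑ x ∈ Finset.univ.filter (fun x : Fin k → ZMod N => ∑ i, x i = n'),
              ∏ i, smoothed N δ ε (a i) (x i)) -
            (∑ x ∈ Finset.univ.filter (fun x : Fin k → ZMod N => ∑ i, x i = n'),
              ∏ i, a i (x i))| ≤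
          K * (D₁ * ε ^ 2 * δ ^ (-(5 : ℝ) / 2) + D₂ * δ ^ ((1 : ℝ) / ((k : ℝ) + 1))) / N := by
  refine ⟨4 * π ^ 2 * k + 4, by positivity, ?_⟩
  intro N _ δ ε hδ hε a ha hmass D₁ D₂ hD₁ hD₂ hR hF n'
  have hk : (1 : ℝ) ≤ k := by exact_mod_cast (by omega : 1 ≤ k)
  have hN : (0 : ℝ) < N := by exact_mod_cast Nat.pos_of_ne_zero (NeZero.ne N)
  have hratio : 2 * (((k : ℝ) + 1) / k) ≤ 4 := by
    rw [mul_div_assoc', div_le_iff₀ (by positivity)]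
    linarith
  have hR₀ := hR ⟨0, by omega⟩
  have hX : 0 ≤ δ ^ (-(5 : ℝ) / 2) := Real.rpow_nonneg hδ.1.le _
  have hY : 0 ≤ δ ^ ((1 : ℝ) / ((k : ℝ) + 1)) := Real.rpow_nonneg hδ.1.le _
  rw [le_div_iff₀ hN, mul_comm _ (N : ℝ)]
  refine (natCast_mul_abs_multiConv_smoothed_sub_le ⟨0, by omega⟩ hδ.1.le hδ.2.le hε.1.le ha
    hmass hF n').trans ?_
  have hπk : 0 ≤ 4 * π ^ 2 * k := by positivity
  nlinarith [mul_le_mul_of_nonneg_left hR₀ (by positivity : 0 ≤ 4 * π ^ 2 * k * ε ^ 2),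
    mul_le_mul_of_nonneg_right hratio (mul_nonneg hY hD₂.le), mul_nonneg hπk (mul_nonneg hD₂.le hY),
    mul_nonneg (mul_nonneg hD₁.le (sq_nonneg ε)) hX]
end
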